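/- Let L₀ be a simple non-abelian anti-commutative algebra over a field whose automorphism group acts irreducibly, and let L = L₀^{⊕ℓ} for ℓ ≥ 1. Then the minimal ideals of L are exactly the ℓ direct summands, and Aut(L) is isomorphic to the wreath product Aut(L₀) ≀ Sym(ℓ). -/

import Mathlib

variable {F L : Type*} [Field F] [AddCommGroup L] [Module F L]

/-- A linear automorphism of `L` preserving the product `mul`. -/
def IsMulAut (mul : L →ₗ[F] L →ₗ[F] L) (e : L ≃ₗ[F] L) : Prop :=
  ∀ x y : L, e (mul x y) = mul (e x) (e y)

/-- `Aut(L)` acts irreducibly on `L`. -/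
def IsIrredAlg (mul : L →ₗ[F] L →ₗ[F] L) : Prop :=
  ∀ W : Submodule F L,
    (∀ e : L ≃ₗ[F] L, IsMulAut mul e → W.map (e : L →ₗ[F] L) = W) → W = ⊥ ∨ W = ⊤

/-- An ideal of the anti-commutative algebra `(L, mul)`. -/
def IsAlgIdeal (mul : L →ₗ[F] L →ₗ[F] L) (W : Submodule F L) : Prop :=
  ∀ x ∈ W, ∀ y : L, mul x y ∈ W

/-- A minimal (non-zero) ideal. -/
def IsMinIdeal (mul : L →ₗ[F] L →ₗ[F] L) (I : Submodule F L) : Prop :=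
  IsAlgIdeal mul I ∧ I ≠ ⊥ ∧ ∀ J : Submodule F L, IsAlgIdeal mul J → J ≤ I → J = ⊥ ∨ J = I

/-- The componentwise product on `L^{⊕ℓ}`. -/
def pimul (mul : L →ₗ[F] L →ₗ[F] L) (ℓ : ℕ) :
    (Fin ℓ → L) →ₗ[F] (Fin ℓ → L) →ₗ[F] (Fin ℓ → L) :=
  LinearMap.mk₂ F (fun f g i => mul (f i) (g i))
    (fun f f' g => by funext i; simp)
    (fun c f g => by funext i; simp)
    (fun f g g' => by funext i; simp)
    (fun c f g => by funext i; simp)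

/-- The `i`-th direct summand of `L^{⊕ℓ}`. -/
def summand (F L : Type*) [Field F] [AddCommGroup L] [Module F L] (ℓ : ℕ) (i : Fin ℓ) :
    Submodule F (Fin ℓ → L) where
  carrier := {f | ∀ j, j ≠ i → f j = 0}
  add_mem' := fun ha hb j hj => by simp [ha j hj, hb j hj]
  zero_mem' := fun j _ => rfl
  smul_mem' := fun c a ha j hj => by simp [ha j hj]

/-- The automorphism group of the algebra `(L, mul)`, as a subgroup of `GL(L)`. -/
def algAutGroup (mul : L →ₗ[F] L →ₗ[F] L) : Subgroup (L ≃ₗ[F] L) where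
  carrier := {e | IsMulAut mul e}
  one_mem' := fun _ _ => rfl
  mul_mem' := by
    intro a b ha hb x y
    show a (b (mul x y)) = mul (a (b x)) (a (b y))
    rw [hb, ha]
  inv_mem' := by
    intro e he x y
    show e.symm (mul x y) = mul (e.symm x) (e.symm y)
    apply e.injective
    rw [he]
    simp

/-- Permutation of the coordinates of `A^ℓ`, as a monoid hom to `MulAut`. -/
def permHom (A : Type*) [Group A] (ℓ : ℕ) :
    Equiv.Perm (Fin ℓ) →* MulAut (Fin ℓ → A) :=
  MonoidHom.mk' (fun σ => MulEquiv.mk (Equiv.arrowCongr σ (Equiv.refl A)) (fun f g => rfl))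
    (by intro σ τ; ext f i; rfl)

/-!
A minimal ideal `W` of `L₀^ℓ` meets some summand `L₀ eᵢ` non-trivially, since otherwise `W`
annihilates every summand and its projections, non-zero ideals of the simple algebra `L₀`, would
annihilate `L₀`. Minimality of `W` and of `L₀ eᵢ` (simplicity of `L₀`) then forces `W = L₀ eᵢ`.
Hence every automorphism permutes the summands, which splits it as a permutation followed by
componentwise automorphisms of `L₀`: the coordinate-wise action of the wreath product is
surjective onto `Aut(L)`, and it is clearly faithful.
-/

namespace IsAlgIdeal

variable {mul : L →ₗ[F] L →ₗ[F] L}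

lemma inf {I J : Submodule F L} (hI : IsAlgIdeal mul I) (hJ : IsAlgIdeal mul J) :
    IsAlgIdeal mul (I ⊓ J) :=
  fun x hx y => ⟨hI x hx.1 y, hJ x hx.2 y⟩

lemma map_of_isMulAut {e : L ≃ₗ[F] L} (he : IsMulAut mul e) {I : Submodule F L}
    (hI : IsAlgIdeal mul I) : IsAlgIdeal mul (I.map (e : L →ₗ[F] L)) := by
  rintro _ ⟨x, hx, rfl⟩ y
  refine ⟨mul x (e.symm y), hI x hx _, ?_⟩
  rw [LinearEquiv.coe_coe, he, e.apply_symm_apply]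

end IsAlgIdeal

lemma isMulAut_symm {mul : L →ₗ[F] L →ₗ[F] L} {e : L ≃ₗ[F] L} (he : IsMulAut mul e) :
    IsMulAut mul e.symm :=
  (algAutGroup mul).inv_mem (x := e) he

lemma IsMinIdeal.map_of_isMulAut {mul : L →ₗ[F] L →ₗ[F] L} {e : L ≃ₗ[F] L}
    (he : IsMulAut mul e) {I : Submodule F L} (hI : IsMinIdeal mul I) :
    IsMinIdeal mul (I.map (e : L →ₗ[F] L)) := by
  obtain ⟨hIdeal, hne, hmin⟩ := hI
  refine ⟨hIdeal.map_of_isMulAut he, by simpa using hne, fun J hJ hle => ?_⟩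
  have hle' : J.map (e.symm : L →ₗ[F] L) ≤ I := by
    rwa [Submodule.map_le_iff_le_comap, ← Submodule.map_equiv_eq_comap_symm]
  rcases hmin _ (hJ.map_of_isMulAut (isMulAut_symm he)) hle' with h | h
  · exact .inl (by simpa using h)
  · exact .inr ((Submodule.map_symm_eq_iff e).1 h).symm

lemma nontrivial_of_mul_ne_zero {mul : L →ₗ[F] L →ₗ[F] L} (hna : ∃ x y : L, mul x y ≠ 0) :
    Nontrivial L := by
  obtain ⟨x, y, hxy⟩ := hna
  exact ⟨x, 0, fun h => hxy (by simp [h])⟩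

section ProductAlgebra

variable {mul : L →ₗ[F] L →ₗ[F] L} {ℓ : ℕ}

lemma pimul_apply (f g : Fin ℓ → L) (i : Fin ℓ) :
    pimul mul ℓ f g i = mul (f i) (g i) := rfl

lemma single_mem_summand (i : Fin ℓ) (x : L) : Pi.single i x ∈ summand F L ℓ i :=
  fun j hj => by simp [hj]

lemma eq_single_of_mem_summand {f : Fin ℓ → L} {i : Fin ℓ} (hf : f ∈ summand F L ℓ i) :
    f = Pi.single i (f i) := by
  funext j
  by_cases h : j = i
  · subst h; simp
  · simp [Pi.single_eq_of_ne h, hf j h]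

lemma summand_ext {f g : Fin ℓ → L} {i : Fin ℓ} (hf : f ∈ summand F L ℓ i)
    (hg : g ∈ summand F L ℓ i) (h : f i = g i) : f = g := by
  rw [eq_single_of_mem_summand hf, eq_single_of_mem_summand hg, h]

lemma summand_injective [Nontrivial L] : Function.Injective (summand F L ℓ) := by
  intro i j h
  by_contra hij
  obtain ⟨x, hx⟩ := exists_ne (0 : L)
  have hmem : Pi.single i x ∈ summand F L ℓ j := h ▸ single_mem_summand i x
  exact hx (by simpa using hmem i hij)

lemma summand_ne_bot [Nontrivial L] (i : Fin ℓ) : summand F L ℓ i ≠ ⊥ := by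
  obtain ⟨x, hx⟩ := exists_ne (0 : L)
  intro h
  have hmem : Pi.single i x ∈ summand F L ℓ i := single_mem_summand i x
  rw [h, Submodule.mem_bot] at hmem
  exact hx (by simpa using congrFun hmem i)

lemma isAlgIdeal_summand (i : Fin ℓ) : IsAlgIdeal (pimul mul ℓ) (summand F L ℓ i) := by
  intro f hf g j hj
  simp [pimul_apply, hf j hj]

lemma IsAlgIdeal.map_proj {W : Submodule F (Fin ℓ → L)} (hW : IsAlgIdeal (pimul mul ℓ) W)
    (i : Fin ℓ) : IsAlgIdeal mul (W.map (LinearMap.proj i)) := by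
  rintro _ ⟨w, hw, rfl⟩ y
  exact ⟨pimul mul ℓ w (Pi.single i y), hW w hw _, by simp [pimul_apply]⟩

lemma isMinIdeal_summand [Nontrivial L]
    (hsimple : ∀ J : Submodule F L, IsAlgIdeal mul J → J = ⊥ ∨ J = ⊤) (i : Fin ℓ) :
    IsMinIdeal (pimul mul ℓ) (summand F L ℓ i) := by
  refine ⟨isAlgIdeal_summand i, summand_ne_bot i, fun J hJ hle => ?_⟩
  rcases hsimple _ (hJ.map_proj i) with h | h
  · refine .inl ((Submodule.eq_bot_iff _).2 fun w hw => ?_)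
    have hwi : w i ∈ J.map (LinearMap.proj i) := ⟨w, hw, rfl⟩
    rw [h, Submodule.mem_bot] at hwi
    exact summand_ext (hle hw) (Submodule.zero_mem _) hwi
  · refine .inr (le_antisymm hle fun f hf => ?_)
    obtain ⟨w, hw, hwf⟩ : f i ∈ J.map (LinearMap.proj i) := h ▸ Submodule.mem_top
    exact summand_ext (hle hw) hf hwf ▸ hw

lemma eq_summand_of_isMinIdeal (hsimple : ∀ J : Submodule F L, IsAlgIdeal mul J → J = ⊥ ∨ J = ⊤)
    (hna : ∃ x y : L, mul x y ≠ 0) {W : Submodule F (Fin ℓ → L)}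
    (hW : IsMinIdeal (pimul mul ℓ) W) : ∃ i : Fin ℓ, W = summand F L ℓ i := by
  obtain ⟨hWideal, hWne, hWmin⟩ := hW
  have := nontrivial_of_mul_ne_zero hna
  obtain ⟨w, hw, hw0⟩ := Submodule.exists_mem_ne_zero_of_ne_bot hWne
  obtain ⟨i, hwi⟩ := Function.ne_iff.1 hw0
  refine ⟨i, ?_⟩
  rcases hWmin _ (hWideal.inf (isAlgIdeal_summand i)) inf_le_left with h | h
  · exfalso
    have hann : ∀ x ∈ W.map (LinearMap.proj i), ∀ y : L, mul x y = 0 := by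
      rintro _ ⟨v, hv, rfl⟩ y
      have hmem : pimul mul ℓ v (Pi.single i y) ∈ W ⊓ summand F L ℓ i :=
        ⟨hWideal v hv _, fun j hj => by simp [pimul_apply, hj]⟩
      rw [h, Submodule.mem_bot] at hmem
      simpa [pimul_apply] using congrFun hmem i
    rcases hsimple _ (hWideal.map_proj i) with hbot | htop
    · have : w i ∈ W.map (LinearMap.proj i) := ⟨w, hw, rfl⟩
      rw [hbot, Submodule.mem_bot] at this
      exact hwi this
    · obtain ⟨x, y, hxy⟩ := hna
      exact hxy (hann x (htop ▸ Submodule.mem_top) y)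
  · have hle : W ≤ summand F L ℓ i := h ▸ inf_le_right
    exact ((isMinIdeal_summand hsimple i).2.2 W hWideal hle).resolve_left hWne

lemma exists_perm_map_summand (hsimple : ∀ J : Submodule F L, IsAlgIdeal mul J → J = ⊥ ∨ J = ⊤)
    (hna : ∃ x y : L, mul x y ≠ 0) {e : (Fin ℓ → L) ≃ₗ[F] (Fin ℓ → L)}
    (he : IsMulAut (pimul mul ℓ) e) :
    ∃ σ : Equiv.Perm (Fin ℓ), ∀ j, (summand F L ℓ j).map (e : (Fin ℓ → L) →ₗ[F] _) =
      summand F L ℓ (σ j) := by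
  have := nontrivial_of_mul_ne_zero hna
  choose τ hτ using fun j => eq_summand_of_isMinIdeal hsimple hna
    ((isMinIdeal_summand hsimple j).map_of_isMulAut he)
  have hτinj : Function.Injective τ := fun j₁ j₂ h => summand_injective <|
    Submodule.map_injective_of_injective e.injective (by rw [hτ, hτ, h])
  exact ⟨Equiv.ofBijective τ hτinj.bijective_of_finite, hτ⟩

variable (F L) in
def summandEquiv (i : Fin ℓ) : L ≃ₗ[F] summand F L ℓ i where
  toFun x := ⟨Pi.single i x, single_mem_summand i x⟩
  invFun f := (f : Fin ℓ → L) i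
  map_add' x y := by ext1; exact Pi.single_add (f := fun _ => L) i x y
  map_smul' c x := by ext1; exact Pi.single_smul' i c x
  left_inv x := by simp
  right_inv f := Subtype.ext (eq_single_of_mem_summand f.2).symm

lemma exists_apply_eq_of_map_summand {e : (Fin ℓ → L) ≃ₗ[F] (Fin ℓ → L)}
    {σ : Equiv.Perm (Fin ℓ)}
    (hσ : ∀ j, (summand F L ℓ j).map (e : (Fin ℓ → L) →ₗ[F] _) = summand F L ℓ (σ j)) :
    ∃ a : Fin ℓ → (L ≃ₗ[F] L), ∀ f i, e f i = a i (f (σ.symm i)) := by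
  let a i : L ≃ₗ[F] L := (summandEquiv F L (σ.symm i)).trans <| (e.submoduleMap _).trans <|
    (LinearEquiv.ofEq _ _ (by rw [hσ, σ.apply_symm_apply])).trans (summandEquiv F L i).symm
  have ha : ∀ i x, a i x = e (Pi.single (σ.symm i) x) i := fun _ _ => by simp [a, summandEquiv]
  have hzero : ∀ j x, e (Pi.single j x) ∈ summand F L ℓ (σ j) := fun j x =>
    hσ j ▸ ⟨_, single_mem_summand j x, rfl⟩
  refine ⟨a, fun f i => ?_⟩
  conv_lhs => rw [← Finset.univ_sum_single f, map_sum, Finset.sum_apply]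
  rw [Finset.sum_eq_single (σ.symm i), ha]
  · intro j _ hj
    exact hzero j (f j) i fun h => hj (by simp [h])
  · simp

lemma isMulAut_of_apply_eq {e : (Fin ℓ → L) ≃ₗ[F] (Fin ℓ → L)} (he : IsMulAut (pimul mul ℓ) e)
    {σ : Equiv.Perm (Fin ℓ)} {a : Fin ℓ → (L ≃ₗ[F] L)} (h : ∀ f i, e f i = a i (f (σ.symm i)))
    (i : Fin ℓ) : IsMulAut mul (a i) := by
  intro x y
  simpa [h, pimul_apply] using congrFun (he (fun _ => x) (fun _ => y)) i

/-- `(a, σ)` acts on `L₀^ℓ` by `f ↦ fun i => a i (f (σ⁻¹ i))`. -/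
def wreathLinearEquiv (a : Fin ℓ → algAutGroup mul) (σ : Equiv.Perm (Fin ℓ)) :
    (Fin ℓ → L) ≃ₗ[F] (Fin ℓ → L) :=
  (LinearEquiv.piCongrLeft' F (fun _ => L) σ).trans
    (LinearEquiv.piCongrRight fun i => (a i : L ≃ₗ[F] L))

lemma wreathLinearEquiv_mem (a : Fin ℓ → algAutGroup mul) (σ : Equiv.Perm (Fin ℓ)) :
    wreathLinearEquiv a σ ∈ algAutGroup (pimul mul ℓ) := fun f g =>
  funext fun i => (a i).2 (f (σ.symm i)) (g (σ.symm i))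

variable (mul ℓ) in
def wreathHom :
    ((Fin ℓ → algAutGroup mul) ⋊[permHom (algAutGroup mul) ℓ] Equiv.Perm (Fin ℓ)) →*
      algAutGroup (pimul mul ℓ) :=
  MonoidHom.mk' (fun p => ⟨wreathLinearEquiv p.left p.right, wreathLinearEquiv_mem p.left p.right⟩)
    fun _ _ => Subtype.ext <| LinearEquiv.toLinearMap_injective rfl

lemma wreathHom_injective [Nontrivial L] : Function.Injective (wreathHom mul ℓ) := by
  rw [injective_iff_map_eq_one]
  rintro ⟨a, σ⟩ h
  have hfix : ∀ (f : Fin ℓ → L) i, (a i : L ≃ₗ[F] L) (f (σ.symm i)) = f i := fun f i =>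
    congrFun (LinearEquiv.congr_fun (congrArg Subtype.val h) f) i
  obtain ⟨x, hx⟩ := exists_ne (0 : L)
  have hσ : ∀ j, σ j = j := fun j => by
    by_contra hj
    have h2 := hfix (Pi.single j x) (σ j)
    rw [Equiv.symm_apply_apply, Pi.single_eq_same, Pi.single_eq_of_ne hj] at h2
    exact hx ((a (σ j) : L ≃ₗ[F] L).map_eq_zero_iff.1 h2)
  obtain rfl : a = 1 := funext fun i => Subtype.ext <| LinearEquiv.ext fun y => hfix (fun _ => y) i
  obtain rfl : σ = 1 := Equiv.ext hσ
  rfl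

lemma wreathHom_surjective (hsimple : ∀ J : Submodule F L, IsAlgIdeal mul J → J = ⊥ ∨ J = ⊤)
    (hna : ∃ x y : L, mul x y ≠ 0) : Function.Surjective (wreathHom mul ℓ) := by
  rintro ⟨e, he⟩
  obtain ⟨σ, hσ⟩ := exists_perm_map_summand hsimple hna he
  obtain ⟨a, ha⟩ := exists_apply_eq_of_map_summand hσ
  exact ⟨⟨fun i => ⟨a i, isMulAut_of_apply_eq he ha i⟩, σ⟩,
    Subtype.ext <| LinearEquiv.ext fun f => funext fun i => (ha f i).symm⟩

end ProductAlgebra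

theorem stmt10_general (mul : L →ₗ[F] L →ₗ[F] L)
    (hsimple : ∀ J : Submodule F L, IsAlgIdeal mul J → J = ⊥ ∨ J = ⊤)
    (hna : ∃ x y : L, mul x y ≠ 0)
    (ℓ : ℕ) :
    (∀ W : Submodule F (Fin ℓ → L),
      IsMinIdeal (pimul mul ℓ) W ↔ ∃ i : Fin ℓ, W = summand F L ℓ i) ∧
    Nonempty (algAutGroup (pimul mul ℓ) ≃*
      ((Fin ℓ → algAutGroup mul) ⋊[permHom (algAutGroup mul) ℓ] Equiv.Perm (Fin ℓ))) := by
  have := nontrivial_of_mul_ne_zero hna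
  refine ⟨fun W => ⟨eq_summand_of_isMinIdeal hsimple hna, ?_⟩, ?_⟩
  · rintro ⟨i, rfl⟩
    exact isMinIdeal_summand hsimple i
  · exact ⟨(MulEquiv.ofBijective (wreathHom mul ℓ)
      ⟨wreathHom_injective, wreathHom_surjective hsimple hna⟩).symm⟩

/-- Let `L₀` be a simple non-abelian anti-commutative algebra whose
automorphism group acts irreducibly, and `L = L₀^{⊕ℓ}` with componentwise product.
Then the minimal ideals of `L` are exactly the `ℓ` direct summands, and
`Aut(L) ≅ Aut(L₀) ≀ Sym(ℓ)`. -/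
theorem stmt10 (mul : L →ₗ[F] L →ₗ[F] L)
    (halt : ∀ x : L, mul x x = 0)
    (hsimple : ∀ J : Submodule F L, IsAlgIdeal mul J → J = ⊥ ∨ J = ⊤)
    (hna : ∃ x y : L, mul x y ≠ 0)
    (hirr : IsIrredAlg mul)
    (ℓ : ℕ) (hl : 1 ≤ ℓ) :
    (∀ W : Submodule F (Fin ℓ → L),
      IsMinIdeal (pimul mul ℓ) W ↔ ∃ i : Fin ℓ, W = summand F L ℓ i) ∧
    Nonempty (algAutGroup (pimul mul ℓ) ≃*
      ((Fin ℓ → algAutGroup mul) ⋊[permHom (algAutGroup mul) ℓ] Equiv.Perm (Fin ℓ))) :=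
  stmt10_general mul hsimple hna ℓ
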